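/- arXiv:1704.02019 — 4 statements merged into one kernel-verified Lean document; each statement's English description precedes it below -/
import Mathlib

section
/- Let W be a symmetric real N×N matrix with zero diagonal, b ∈ ℝ^N, and define the Hopfield energy of a state x ∈ {0,1}^N by E(x) = −(1/2)·∑_{i≠j} W_{ij} x_i x_j − ∑_i b_i x_i. Fix a node i and let x' agree with x on all coordinates except possibly i, where x'_i = 1 if ∑_j W_{ij} x_j + b_i > 0 and x'_i = 0 if ∑_j W_{ij} x_j + b_i < 0 (and x'_i arbitrary if ∑_j W_{ij} x_j + b_i = 0). Then E(x') ≤ E(x), i.e., an asynchronous Hopfield update never increases the energy. -/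
/-!
Changing the state of node `i` by `d` changes the quadratic part of the energy by
`-d (Wx)_i - d² W_ii / 2` (symmetry makes the two cross terms equal) and the bias part by `-d b_i`;
with `W_ii = 0` the energy therefore changes by `-d · ((Wx)_i + b_i)`. The threshold rule makes
`d` have the sign of the local field `(Wx)_i + b_i`, because `x_i ∈ [0, 1]`.
-/

open Finset Matrix

theorem Function.update_eq_add_single_sub {ι G : Type*} [DecidableEq ι] [AddCommGroup G]
    (x : ι → G) (i : ι) (v : G) : Function.update x i v = x + Pi.single i (v - x i) := by
  ext j
  rcases eq_or_ne j i with rfl | hj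
  · simp
  · simp [hj]

section QuadraticForm

variable {ι R : Type*} [Fintype ι] [DecidableEq ι] [CommRing R]

theorem sum_sum_erase_eq_dotProduct_mulVec {W : Matrix ι ι R} (hdiag : ∀ i, W i i = 0)
    (y : ι → R) : ∑ k, ∑ j ∈ univ.erase k, W k j * y k * y j = y ⬝ᵥ (W *ᵥ y) := by
  refine sum_congr rfl fun k _ => ?_
  rw [sum_erase _ (by simp [hdiag k])]
  simp only [mulVec, dotProduct, mul_sum]
  exact sum_congr rfl fun j _ => by ring

theorem dotProduct_mulVec_single_of_isSymm {W : Matrix ι ι R} (hW : W.IsSymm) (y : ι → R)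
    (i : ι) (d : R) : y ⬝ᵥ (W *ᵥ Pi.single i d) = d * (W *ᵥ y) i := by
  rw [dotProduct_mulVec, dotProduct_single, ← mulVec_transpose, hW.eq, mul_comm]

theorem dotProduct_mulVec_add_single {W : Matrix ι ι R} (hW : W.IsSymm) (y : ι → R) (i : ι)
    (d : R) :
    (y + Pi.single i d) ⬝ᵥ (W *ᵥ (y + Pi.single i d)) =
      y ⬝ᵥ (W *ᵥ y) + 2 * d * (W *ᵥ y) i + d * d * W i i := by
  have hdiag : (W *ᵥ Pi.single i d) i = W i i * d := dotProduct_single _ _ _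
  rw [mulVec_add, add_dotProduct, dotProduct_add, dotProduct_add,
    dotProduct_mulVec_single_of_isSymm hW, single_dotProduct, single_dotProduct, hdiag]
  ring

end QuadraticForm

theorem sub_mul_nonneg_of_threshold {R : Type*} [Ring R] [LinearOrder R] [IsStrictOrderedRing R]
    {a a' h : R} (ha₀ : 0 ≤ a) (ha₁ : a ≤ 1) (hpos : 0 < h → a' = 1) (hneg : h < 0 → a' = 0) :
    0 ≤ (a' - a) * h := by
  rcases lt_trichotomy h 0 with h_neg | rfl | h_pos
  · rw [hneg h_neg, zero_sub]
    exact mul_nonneg_of_nonpos_of_nonpos (neg_nonpos.2 ha₀) h_neg.le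
  · rw [mul_zero]
  · rw [hpos h_pos]
    exact mul_nonneg (sub_nonneg.2 ha₁) h_pos.le

section Energy

variable {ι R : Type*} [Fintype ι] [DecidableEq ι] [Field R]

def hopfieldEnergy (W : Matrix ι ι R) (b x : ι → R) : R :=
  -(1 / 2) * x ⬝ᵥ (W *ᵥ x) - b ⬝ᵥ x

theorem hopfieldEnergy_update [NeZero (2 : R)] {W : Matrix ι ι R} (hW : W.IsSymm) (b x : ι → R)
    {i : ι} (hii : W i i = 0) (v : R) :
    hopfieldEnergy W b (Function.update x i v) =
      hopfieldEnergy W b x - (v - x i) * ((W *ᵥ x) i + b i) := by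
  rw [hopfieldEnergy, hopfieldEnergy, Function.update_eq_add_single_sub,
    dotProduct_mulVec_add_single hW, dotProduct_add, dotProduct_single, hii]
  field_simp
  ring

theorem hopfieldEnergy_update_le [LinearOrder R] [IsStrictOrderedRing R] {W : Matrix ι ι R}
    (hW : W.IsSymm) (b x : ι → R) {i : ι} (hii : W i i = 0) (hx₀ : 0 ≤ x i) (hx₁ : x i ≤ 1)
    {v : R} (hpos : 0 < (W *ᵥ x) i + b i → v = 1) (hneg : (W *ᵥ x) i + b i < 0 → v = 0) :
    hopfieldEnergy W b (Function.update x i v) ≤ hopfieldEnergy W b x := by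
  rw [hopfieldEnergy_update hW b x hii]
  exact sub_le_self _ (sub_mul_nonneg_of_threshold hx₀ hx₁ hpos hneg)

end Energy

theorem hopfield_update_energy_nonincreasing_general
    {N : ℕ} (W : Matrix (Fin N) (Fin N) ℝ) (b : Fin N → ℝ)
    (hsymm : ∀ i j, W i j = W j i) (hdiag : ∀ i, W i i = 0)
    (x x' : Fin N → ℝ)
    (hx : ∀ j, x j = 0 ∨ x j = 1)
    (i : Fin N)
    (hagree : ∀ j, j ≠ i → x' j = x j)
    (hpos : (∑ j, W i j * x j) + b i > 0 → x' i = 1)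
    (hneg : (∑ j, W i j * x j) + b i < 0 → x' i = 0) :
    (-(1/2) * ∑ k, ∑ j ∈ Finset.univ.erase k, W k j * x' k * x' j
        - ∑ k, b k * x' k) ≤
      (-(1/2) * ∑ k, ∑ j ∈ Finset.univ.erase k, W k j * x k * x j
        - ∑ k, b k * x k) := by
  have hW : W.IsSymm := IsSymm.ext_iff.2 fun i j => hsymm j i
  have hx'_eq : x' = Function.update x i (x' i) := Function.eq_update_iff.2 ⟨rfl, hagree⟩
  obtain ⟨hx₀, hx₁⟩ : 0 ≤ x i ∧ x i ≤ 1 := by rcases hx i with h | h <;> simp [h]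
  rw [sum_sum_erase_eq_dotProduct_mulVec hdiag, sum_sum_erase_eq_dotProduct_mulVec hdiag]
  change hopfieldEnergy W b x' ≤ hopfieldEnergy W b x
  rw [hx'_eq]
  exact hopfieldEnergy_update_le hW b x (hdiag i) hx₀ hx₁ hpos hneg

/-- **Asynchronous Hopfield updates never increase the energy.**
Let `W` be a symmetric real `N × N` matrix with zero diagonal, `b ∈ ℝ^N`, and
define the Hopfield energy of a state `x ∈ {0,1}^N` by
`E(x) = -(1/2) ∑_{i ≠ j} W i j * x i * x j - ∑ i, b i * x i`.
Fix a node `i` and let `x'` agree with `x` on all coordinates except possibly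
`i`, where `x' i = 1` if `∑ j, W i j * x j + b i > 0` and `x' i = 0` if
`∑ j, W i j * x j + b i < 0` (arbitrary in `{0,1}` when the input is `0`).
Then `E(x') ≤ E(x)`. -/
theorem hopfield_update_energy_nonincreasing
    {N : ℕ} (W : Matrix (Fin N) (Fin N) ℝ) (b : Fin N → ℝ)
    (hsymm : ∀ i j, W i j = W j i) (hdiag : ∀ i, W i i = 0)
    (x x' : Fin N → ℝ)
    (hx : ∀ j, x j = 0 ∨ x j = 1) (hx' : ∀ j, x' j = 0 ∨ x' j = 1)
    (i : Fin N)
    (hagree : ∀ j, j ≠ i → x' j = x j)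
    (hpos : (∑ j, W i j * x j) + b i > 0 → x' i = 1)
    (hneg : (∑ j, W i j * x j) + b i < 0 → x' i = 0) :
    (-(1/2) * ∑ k, ∑ j ∈ Finset.univ.erase k, W k j * x' k * x' j
        - ∑ k, b k * x' k) ≤
      (-(1/2) * ∑ k, ∑ j ∈ Finset.univ.erase k, W k j * x k * x j
        - ∑ k, b k * x k) :=
  hopfield_update_energy_nonincreasing_general W b hsymm hdiag x x' hx i hagree hpos hneg
end

section
/- Let G be a finite bipartite graph with variable nodes V (|V| = N) and constraint nodes C, and suppose G is a (γ, 1−ε) expander, i.e., every S ⊆ V with |S| ≤ γN satisfies |N(S)| ≥ (1−ε)|δ(S)|. Then every subset E ⊆ V with |E| ≤ γN has at least (1−2ε)|δ(E)| unique neighbors: |Unique(E)| ≥ (1−2ε)|δ(E)|. -/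
/-!
Sum the degrees `d c = |{v ∈ E | Adj v c}|` over the constraints: a neighbor of `E` is either
unique (`d c = 1`) or has `d c ≥ 2`, so `2 |N(E)| ≤ |δ(E)| + |Unique(E)|`. Together with
`|N(E)| ≥ (1 - ε) |δ(E)|` this gives `|Unique(E)| ≥ (1 - 2ε) |δ(E)|`.
-/

open Finset

theorem two_mul_card_filter_ne_zero_le {ι : Type*} (s : Finset ι) (d : ι → ℕ) :
    2 * #(s.filter (d · ≠ 0)) ≤ ∑ i ∈ s, d i + #(s.filter (d · = 1)) := by
  rw [card_filter, card_filter, mul_sum, ← sum_add_distrib]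
  refine sum_le_sum fun i _ => ?_
  split_ifs <;> omega

section Bipartite

open scoped Classical

variable {V C : Type*} [Fintype C] (Adj : V → C → Prop)

theorem filter_exists_adj_eq_filter_card_ne_zero (E : Finset V) :
    univ.filter (fun c : C => ∃ v ∈ E, Adj v c) =
      univ.filter (fun c : C => #(E.filter (Adj · c)) ≠ 0) := by
  ext c
  simp

theorem card_edges_eq_sum_card_filter_adj [Fintype V] (E : Finset V) :
    #(univ.filter (fun p : V × C => p.1 ∈ E ∧ Adj p.1 p.2)) = ∑ c, #(E.filter (Adj · c)) := by
  rw [card_filter, Fintype.sum_prod_type_right]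
  refine sum_congr rfl fun c _ => ?_
  rw [← card_filter]
  congr 1
  ext v
  simp

theorem two_mul_card_neighbors_le [Fintype V] (E : Finset V) :
    2 * #(univ.filter (fun c : C => ∃ v ∈ E, Adj v c)) ≤
      #(univ.filter (fun p : V × C => p.1 ∈ E ∧ Adj p.1 p.2)) +
        #(univ.filter (fun c : C => #(E.filter (Adj · c)) = 1)) := by
  rw [filter_exists_adj_eq_filter_card_ne_zero, card_edges_eq_sum_card_filter_adj]
  exact two_mul_card_filter_ne_zero_le _ _

end Bipartite

open scoped Classical in
theorem expander_unique_neighbors_general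
    {V C : Type*} [Fintype V] [Fintype C] (Adj : V → C → Prop)
    (γ ε : ℝ)
    (hexp : ∀ S : Finset V, (S.card : ℝ) ≤ γ * (Fintype.card V) →
      ((Finset.univ.filter (fun c : C => ∃ v ∈ S, Adj v c)).card : ℝ) ≥
        (1 - ε) * ((Finset.univ.filter (fun p : V × C => p.1 ∈ S ∧ Adj p.1 p.2)).card : ℝ))
    (E : Finset V) (hE : (E.card : ℝ) ≤ γ * (Fintype.card V)) :
    ((Finset.univ.filter (fun c : C => (E.filter (fun v => Adj v c)).card = 1)).card : ℝ) ≥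
      (1 - 2 * ε) *
        ((Finset.univ.filter (fun p : V × C => p.1 ∈ E ∧ Adj p.1 p.2)).card : ℝ) := by
  have hcount : (2 * #(univ.filter (fun c : C => ∃ v ∈ E, Adj v c)) : ℝ) ≤
      #(univ.filter (fun p : V × C => p.1 ∈ E ∧ Adj p.1 p.2)) +
        #(univ.filter (fun c : C => #(E.filter (Adj · c)) = 1)) := by
    exact_mod_cast two_mul_card_neighbors_le Adj E
  linarith [hexp E hE]

open scoped Classical in
/-- **Expansion implies many unique neighbors.**
Let `G` be a finite bipartite graph with variable nodes `V` (`|V| = N`) and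
constraint nodes `C`, and suppose `G` is a `(γ, 1-ε)` expander: every
`S ⊆ V` with `|S| ≤ γN` satisfies `|N(S)| ≥ (1-ε) |δ(S)|`.  Then every
`E ⊆ V` with `|E| ≤ γN` has at least `(1-2ε) |δ(E)|` unique neighbors. -/
theorem expander_unique_neighbors
    {V C : Type*} [Fintype V] [Fintype C] (Adj : V → C → Prop)
    (γ ε : ℝ) (hγ : 0 < γ) (hε : 0 ≤ ε)
    (hexp : ∀ S : Finset V, (S.card : ℝ) ≤ γ * (Fintype.card V) →
      ((Finset.univ.filter (fun c : C => ∃ v ∈ S, Adj v c)).card : ℝ) ≥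
        (1 - ε) * ((Finset.univ.filter (fun p : V × C => p.1 ∈ S ∧ Adj p.1 p.2)).card : ℝ))
    (E : Finset V) (hE : (E.card : ℝ) ≤ γ * (Fintype.card V)) :
    ((Finset.univ.filter (fun c : C => (E.filter (fun v => Adj v c)).card = 1)).card : ℝ) ≥
      (1 - 2 * ε) *
        ((Finset.univ.filter (fun p : V × C => p.1 ∈ E ∧ Adj p.1 p.2)).card : ℝ) :=
  expander_unique_neighbors_general Adj γ ε hexp E hE
end

section
/- Let G be a finite bipartite graph with variable nodes V (|V| = N) and constraint nodes C that is a (γ, 1−ε) expander, and equip each constraint node c with a set A_c of satisfying local assignments (functions from the neighbors of c to {0,1}) such that any two distinct elements of A_c differ in at least two coordinates. Let Q_0 : V → {0,1} be a state satisfying every constraint, let Q : V → {0,1} differ from Q_0 exactly on a set E ⊆ V with |E| ≤ γN, and let U(E) be the set of constraints unsatisfied by Q. Then every unique neighbor of E is unsatisfied by Q, and hence |U(E)| ≥ (1−2ε)|δ(E)|. -/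
/-!
If a constraint has exactly one neighbour in `E`, the restrictions of `Q` and `Q₀` to its
neighbours differ in exactly one coordinate, which no two satisfying assignments do; since `Q₀`
satisfies it, `Q` does not. For the count, sort the edges of `δ(E)` by their constraint endpoint:
each neighbour of `E` receives at least one edge and each non-unique one at least two, so
`2|N(E)| ≤ |δ(E)| + #unique`. With `|N(E)| ≥ (1-ε)|δ(E)|` there are at least `(1-2ε)|δ(E)|`
unique neighbours, all unsatisfied.
-/

open Finset

open scoped Classical

section

variable {V C : Type*} [Fintype V] [Fintype C]

def SatisfiesCon (Adj : V → C → Prop) (A : ∀ c : C, Set ({v : V // Adj v c} → Bool))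
    (Q : V → Bool) (c : C) : Prop :=
  (fun v : {v : V // Adj v c} => Q v.1) ∈ A c

theorem notMem_of_hammingDist_eq_one {ι β : Type*} [Fintype ι] [DecidableEq β]
    {A : Set (ι → β)} (hA : ∀ f ∈ A, ∀ g ∈ A, f ≠ g → 2 ≤ hammingDist f g)
    {f g : ι → β} (hf : f ∈ A) (hfg : hammingDist f g = 1) : g ∉ A := fun hg =>
  absurd (hA f hf g hg (hammingDist_pos.mp (by omega))) (by omega)

namespace Bipartite

variable (Adj : V → C → Prop)

noncomputable def edges (S : Finset V) : Finset (V × C) :=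
  univ.filter fun p : V × C => p.1 ∈ S ∧ Adj p.1 p.2

noncomputable def nbhd (S : Finset V) : Finset C :=
  univ.filter fun c : C => ∃ v ∈ S, Adj v c

noncomputable def degIn (S : Finset V) (c : C) : ℕ :=
  #(S.filter fun v => Adj v c)

noncomputable def uniqueNbhd (S : Finset V) : Finset C :=
  univ.filter fun c : C => degIn Adj S c = 1

variable {Adj}

omit [Fintype V] in
theorem degIn_pos_iff {S : Finset V} {c : C} : 0 < degIn Adj S c ↔ c ∈ nbhd Adj S := by
  simp [degIn, nbhd, card_pos, Finset.Nonempty]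

theorem card_edges_eq_sum_degIn (S : Finset V) : #(edges Adj S) = ∑ c, degIn Adj S c := by
  rw [edges, card_filter, Fintype.sum_prod_type_right]
  refine sum_congr rfl fun c _ => ?_
  rw [degIn, card_filter]
  simp only [ite_and, sum_ite_mem, univ_inter]

theorem two_mul_card_nbhd_le (S : Finset V) :
    2 * #(nbhd Adj S) ≤ #(edges Adj S) + #(uniqueNbhd Adj S) := by
  rw [card_edges_eq_sum_degIn, nbhd, uniqueNbhd, card_filter, card_filter, mul_sum,
    ← sum_add_distrib]
  refine sum_le_sum fun c _ => ?_
  have hpos := degIn_pos_iff (Adj := Adj) (S := S) (c := c)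
  simp only [nbhd, mem_filter, mem_univ, true_and] at hpos
  simp only [← hpos]
  split_ifs <;> omega

theorem le_card_uniqueNbhd_of_expansion {S : Finset V} {ε : ℝ}
    (hexp : (1 - ε) * #(edges Adj S) ≤ #(nbhd Adj S)) :
    (1 - 2 * ε) * #(edges Adj S) ≤ #(uniqueNbhd Adj S) := by
  have hcount : (2 * #(nbhd Adj S) : ℝ) ≤ #(edges Adj S) + #(uniqueNbhd Adj S) := by
    exact_mod_cast two_mul_card_nbhd_le S
  linarith

omit [Fintype C] in
theorem hammingDist_restrict_eq_degIn {β : Type*} [DecidableEq β] {Q₀ Q : V → β}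
    {E : Finset V} (hQE : ∀ v, v ∈ E ↔ Q v ≠ Q₀ v) (c : C) :
    hammingDist (fun w : {v // Adj v c} => Q₀ w.1) (fun w => Q w.1) = degIn Adj E c := by
  refine card_bij (fun w _ => w.1) (fun w hw => ?_) (fun _ _ _ _ => Subtype.ext)
    (fun v hv => ?_)
  · simp only [mem_filter, mem_univ, true_and] at hw
    exact mem_filter.mpr ⟨(hQE w.1).mpr (Ne.symm hw), w.2⟩
  · obtain ⟨hvE, hvc⟩ := mem_filter.mp hv
    exact ⟨⟨v, hvc⟩, by simpa [eq_comm] using (hQE v).mp hvE, rfl⟩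

omit [Fintype C] in
theorem not_satisfiesCon_of_degIn_eq_one {A : ∀ c : C, Set ({v : V // Adj v c} → Bool)} {c : C}
    (hdist : ∀ f ∈ A c, ∀ g ∈ A c, f ≠ g → 2 ≤ hammingDist f g)
    {Q₀ Q : V → Bool} (hQ₀ : SatisfiesCon Adj A Q₀ c)
    {E : Finset V} (hQE : ∀ v, v ∈ E ↔ Q v ≠ Q₀ v) (hc : degIn Adj E c = 1) :
    ¬ SatisfiesCon Adj A Q c :=
  notMem_of_hammingDist_eq_one hdist hQ₀ ((hammingDist_restrict_eq_degIn hQE c).trans hc)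

end Bipartite

open Bipartite

theorem unique_neighbors_unsat_and_card_unsat_ge_general
    (Adj : V → C → Prop) (γ ε : ℝ)
    (hexp : ∀ S : Finset V, (S.card : ℝ) ≤ γ * (Fintype.card V) →
      ((Finset.univ.filter (fun c : C => ∃ v ∈ S, Adj v c)).card : ℝ) ≥
        (1 - ε) * ((Finset.univ.filter (fun p : V × C => p.1 ∈ S ∧ Adj p.1 p.2)).card : ℝ))
    (A : ∀ c : C, Set ({v : V // Adj v c} → Bool))
    (hdist : ∀ c : C, ∀ f ∈ A c, ∀ g ∈ A c, f ≠ g →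
      2 ≤ (Finset.univ.filter (fun v : {v : V // Adj v c} => f v ≠ g v)).card)
    (Q₀ Q : V → Bool) (hQ₀ : ∀ c : C, SatisfiesCon Adj A Q₀ c)
    (E : Finset V) (hQE : ∀ v : V, v ∈ E ↔ Q v ≠ Q₀ v)
    (hE : (E.card : ℝ) ≤ γ * (Fintype.card V)) :
    (∀ c : C, (E.filter (fun v => Adj v c)).card = 1 → ¬ SatisfiesCon Adj A Q c) ∧
    ((Finset.univ.filter (fun c : C => ¬ SatisfiesCon Adj A Q c)).card : ℝ) ≥
      (1 - 2 * ε) *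
        ((Finset.univ.filter (fun p : V × C => p.1 ∈ E ∧ Adj p.1 p.2)).card : ℝ) := by
  have unique_unsat : ∀ c : C, degIn Adj E c = 1 → ¬ SatisfiesCon Adj A Q c := fun c =>
    not_satisfiesCon_of_degIn_eq_one (hdist c) (hQ₀ c) hQE
  refine ⟨unique_unsat, ?_⟩
  have hsub : uniqueNbhd Adj E ⊆ univ.filter fun c : C => ¬ SatisfiesCon Adj A Q c :=
    monotone_filter_right _ fun c _ => unique_unsat c
  calc (1 - 2 * ε) * (#(edges Adj E) : ℝ)
      ≤ #(uniqueNbhd Adj E) := le_card_uniqueNbhd_of_expansion (hexp E hE)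
    _ ≤ _ := by exact_mod_cast card_le_card hsub

/-- **Unique neighbors of the error set are unsatisfied.**
Let `G` be a finite bipartite `(γ, 1-ε)` expander with variable nodes `V`
(`|V| = N`) and constraint nodes `C`, each constraint `c` carrying a set `A c`
of satisfying local assignments, any two distinct elements of which differ in
at least two coordinates.  Let `Q₀` satisfy every constraint and let `Q`
differ from `Q₀` exactly on `E ⊆ V` with `|E| ≤ γN`, and let `U(E)` be the set
of constraints unsatisfied by `Q`.  Then every unique neighbor of `E` is
unsatisfied by `Q`, and hence `|U(E)| ≥ (1-2ε) |δ(E)|`. -/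
theorem unique_neighbors_unsat_and_card_unsat_ge
    (Adj : V → C → Prop) (γ ε : ℝ) (hγ : 0 < γ) (hε : 0 ≤ ε)
    (hexp : ∀ S : Finset V, (S.card : ℝ) ≤ γ * (Fintype.card V) →
      ((Finset.univ.filter (fun c : C => ∃ v ∈ S, Adj v c)).card : ℝ) ≥
        (1 - ε) * ((Finset.univ.filter (fun p : V × C => p.1 ∈ S ∧ Adj p.1 p.2)).card : ℝ))
    (A : ∀ c : C, Set ({v : V // Adj v c} → Bool))
    (hdist : ∀ c : C, ∀ f ∈ A c, ∀ g ∈ A c, f ≠ g →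
      2 ≤ (Finset.univ.filter (fun v : {v : V // Adj v c} => f v ≠ g v)).card)
    (Q₀ Q : V → Bool) (hQ₀ : ∀ c : C, SatisfiesCon Adj A Q₀ c)
    (E : Finset V) (hQE : ∀ v : V, v ∈ E ↔ Q v ≠ Q₀ v)
    (hE : (E.card : ℝ) ≤ γ * (Fintype.card V)) :
    (∀ c : C, (E.filter (fun v => Adj v c)).card = 1 → ¬ SatisfiesCon Adj A Q c) ∧
    ((Finset.univ.filter (fun c : C => ¬ SatisfiesCon Adj A Q c)).card : ℝ) ≥
      (1 - 2 * ε) *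
        ((Finset.univ.filter (fun p : V × C => p.1 ∈ E ∧ Adj p.1 p.2)).card : ℝ) :=
  unique_neighbors_unsat_and_card_unsat_ge_general Adj γ ε hexp A hdist Q₀ Q hQ₀ E hQE hE

end
end

section
/- Let G be a finite bipartite graph with variable nodes V (|V| = N) and constraint nodes C that is a (γ, 1−ε) expander with ε < 1/2, in which every variable node has degree at least 1, and equip each constraint node c with a set A_c of satisfying local assignments any two distinct elements of which differ in at least two coordinates. Then any two distinct states Q_0, Q_1 : V → {0,1} that both satisfy all constraints differ on more than γN variable nodes. -/
/-!
Let `S` be the nonempty set on which the two states disagree and suppose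
`|S| ≤ γN`. Two distinct satisfying local assignments differ in at least two coordinates,
so every constraint touching `S` is joined to `S` by at least two edges, whence
`2 |N(S)| ≤ |δ(S)|`. Expansion gives `|N(S)| ≥ (1 - ε) |δ(S)| > |δ(S)| / 2`, so `δ(S)` is
empty, contradicting that the variables of `S` have neighbors.
-/

open Finset

open scoped Classical

section

variable {V C : Type*} [Fintype V] [Fintype C]

/-- `N(S)` -/
noncomputable def neighbors (Adj : V → C → Prop) (S : Finset V) : Finset C :=
  univ.filter fun c => ∃ v ∈ S, Adj v c

/-- `δ(S)` -/
noncomputable def incidentEdges (Adj : V → C → Prop) (S : Finset V) : Finset (V × C) :=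
  univ.filter fun p => p.1 ∈ S ∧ Adj p.1 p.2

theorem card_incidentEdges (Adj : V → C → Prop) (S : Finset V) :
    #(incidentEdges Adj S) = ∑ c, #(S.filter (Adj · c)) := by
  rw [incidentEdges, card_filter, Fintype.sum_prod_type_right]
  simp only [card_filter, ite_and, sum_ite_mem, univ_inter]

theorem two_mul_card_neighbors_le_card_incidentEdges (Adj : V → C → Prop) (S : Finset V)
    (hmult : ∀ c ∈ neighbors Adj S, 2 ≤ #(S.filter (Adj · c))) :
    2 * #(neighbors Adj S) ≤ #(incidentEdges Adj S) :=
  calc 2 * #(neighbors Adj S) = ∑ _c ∈ neighbors Adj S, 2 := by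
        rw [sum_const, smul_eq_mul, mul_comm]
    _ ≤ ∑ c ∈ neighbors Adj S, #(S.filter (Adj · c)) := sum_le_sum hmult
    _ ≤ ∑ c, #(S.filter (Adj · c)) := sum_le_sum_of_subset (subset_univ _)
    _ = #(incidentEdges Adj S) := (card_incidentEdges Adj S).symm

theorem incidentEdges_eq_empty_of_expansion (Adj : V → C → Prop) (S : Finset V) {ε : ℝ}
    (hε : ε < 1 / 2)
    (hexp : (#(neighbors Adj S) : ℝ) ≥ (1 - ε) * #(incidentEdges Adj S))
    (hmult : ∀ c ∈ neighbors Adj S, 2 ≤ #(S.filter (Adj · c))) :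
    incidentEdges Adj S = ∅ := by
  have hdouble : (2 * #(neighbors Adj S) : ℝ) ≤ #(incidentEdges Adj S) := by
    exact_mod_cast two_mul_card_neighbors_le_card_incidentEdges Adj S hmult
  have hnonneg : (0 : ℝ) ≤ #(incidentEdges Adj S) := Nat.cast_nonneg _
  have hzero : (#(incidentEdges Adj S) : ℝ) = 0 := by nlinarith
  exact card_eq_zero.mp (by exact_mod_cast hzero)

theorem incidentEdges_nonempty {Adj : V → C → Prop} {S : Finset V} {v : V} {c : C}
    (hv : v ∈ S) (hvc : Adj v c) : (incidentEdges Adj S).Nonempty :=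
  ⟨(v, c), by simp [incidentEdges, hv, hvc]⟩

theorem two_le_card_disagreements_adj {Adj : V → C → Prop}
    {A : ∀ c : C, Set ({v : V // Adj v c} → Bool)}
    (hdist : ∀ c : C, ∀ f ∈ A c, ∀ g ∈ A c, f ≠ g →
      2 ≤ (univ.filter (fun v : {v : V // Adj v c} => f v ≠ g v)).card)
    {Q₀ Q₁ : V → Bool} {c : C} (hQ₀ : SatisfiesCon Adj A Q₀ c) (hQ₁ : SatisfiesCon Adj A Q₁ c)
    (hc : c ∈ neighbors Adj (univ.filter fun v => Q₀ v ≠ Q₁ v)) :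
    2 ≤ #((univ.filter fun v => Q₀ v ≠ Q₁ v).filter (Adj · c)) := by
  obtain ⟨v, hv, hvc⟩ := (mem_filter.mp hc).2
  have hlocal : (fun w : {v : V // Adj v c} => Q₀ w.1) ≠ fun w => Q₁ w.1 :=
    fun h => (mem_filter.mp hv).2 (congrFun h ⟨v, hvc⟩)
  refine (hdist c _ hQ₀ _ hQ₁ hlocal).trans (card_le_card_of_injOn Subtype.val ?_ ?_)
  · intro w hw
    simp_all [w.2]
  · exact Subtype.val_injective.injOn

theorem satisfying_states_far_apart_general
    (Adj : V → C → Prop) (γ ε : ℝ) (hε : ε < 1/2)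
    (hdeg : ∀ v : V, ∃ c : C, Adj v c)
    (hexp : ∀ S : Finset V, (S.card : ℝ) ≤ γ * (Fintype.card V) →
      ((Finset.univ.filter (fun c : C => ∃ v ∈ S, Adj v c)).card : ℝ) ≥
        (1 - ε) * ((Finset.univ.filter (fun p : V × C => p.1 ∈ S ∧ Adj p.1 p.2)).card : ℝ))
    (A : ∀ c : C, Set ({v : V // Adj v c} → Bool))
    (hdist : ∀ c : C, ∀ f ∈ A c, ∀ g ∈ A c, f ≠ g →
      2 ≤ (Finset.univ.filter (fun v : {v : V // Adj v c} => f v ≠ g v)).card)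
    (Q₀ Q₁ : V → Bool) (hQ₀ : ∀ c : C, SatisfiesCon Adj A Q₀ c)
    (hQ₁ : ∀ c : C, SatisfiesCon Adj A Q₁ c) (hne : Q₀ ≠ Q₁) :
    ((Finset.univ.filter (fun v : V => Q₀ v ≠ Q₁ v)).card : ℝ) >
      γ * (Fintype.card V) := by
  by_contra hsmall
  set S := univ.filter fun v => Q₀ v ≠ Q₁ v
  obtain ⟨v, hv⟩ := Function.ne_iff.mp hne
  obtain ⟨c, hvc⟩ := hdeg v
  have hempty : incidentEdges Adj S = ∅ :=
    incidentEdges_eq_empty_of_expansion Adj S hε (hexp S (not_lt.mp hsmall))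
      fun c hc => two_le_card_disagreements_adj hdist (hQ₀ c) (hQ₁ c) hc
  exact (incidentEdges_nonempty (by simpa [S] using hv) hvc).ne_empty hempty

/-- **Satisfying states of an expander code are far apart.**
Let `G` be a finite bipartite `(γ, 1-ε)` expander with `ε < 1/2`, variable
nodes `V` (`|V| = N`, every variable of degree at least `1`) and constraint
nodes `C`, each constraint `c` carrying a set `A c` of satisfying local
assignments any two distinct elements of which differ in at least two
coordinates.  Then any two distinct states `Q₀, Q₁ : V → {0,1}` that both
satisfy all constraints differ on more than `γN` variable nodes. -/
theorem satisfying_states_far_apart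
    (Adj : V → C → Prop) (γ ε : ℝ) (hγ : 0 < γ) (hε0 : 0 ≤ ε) (hε : ε < 1/2)
    (hdeg : ∀ v : V, ∃ c : C, Adj v c)
    (hexp : ∀ S : Finset V, (S.card : ℝ) ≤ γ * (Fintype.card V) →
      ((Finset.univ.filter (fun c : C => ∃ v ∈ S, Adj v c)).card : ℝ) ≥
        (1 - ε) * ((Finset.univ.filter (fun p : V × C => p.1 ∈ S ∧ Adj p.1 p.2)).card : ℝ))
    (A : ∀ c : C, Set ({v : V // Adj v c} → Bool))
    (hdist : ∀ c : C, ∀ f ∈ A c, ∀ g ∈ A c, f ≠ g →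
      2 ≤ (Finset.univ.filter (fun v : {v : V // Adj v c} => f v ≠ g v)).card)
    (Q₀ Q₁ : V → Bool) (hQ₀ : ∀ c : C, SatisfiesCon Adj A Q₀ c)
    (hQ₁ : ∀ c : C, SatisfiesCon Adj A Q₁ c) (hne : Q₀ ≠ Q₁) :
    ((Finset.univ.filter (fun v : V => Q₀ v ≠ Q₁ v)).card : ℝ) >
      γ * (Fintype.card V) :=
  satisfying_states_far_apart_general Adj γ ε hε hdeg hexp A hdist Q₀ Q₁ hQ₀ hQ₁ hne

end
end
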